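/- arXiv:1801.09362 — 2 statements merged into one kernel-verified Lean document; each statement's English description precedes it below -/
import Mathlib

section
/- For K > 0 and a complex number z = u + iρ with u ∈ ℝ and ρ < -1, the integral ∫_{log K}^∞ e^{-izx}(e^x - K) dx converges and equals K^{ρ+1-iu}/((ρ - iu)(ρ + 1 - iu)). -/
/-!
Since `e^{cx}(e^x - K) = e^{(c+1)x} - K e^{cx}` and both `Re c` and `Re (c + 1)` are negative,
the integral splits into two exponential integrals over `(log K, ∞)`, giving
`-K^{c+1}/(c+1) + K · K^c/c = K^{c+1}/(c(c+1))`. For `c = -iz = ρ - iu` this is the claim.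
-/

open Complex MeasureTheory Set

theorem cexp_mul_ofReal_log {K : ℝ} (hK : 0 < K) (c : ℂ) :
    cexp (c * Real.log K) = (K : ℂ) ^ c := by
  rw [cpow_def_of_ne_zero (ofReal_ne_zero.mpr hK.ne'), ← ofReal_log hK.le, mul_comm]

theorem cexp_mul_mul_cexp_sub (c : ℂ) (K x : ℝ) :
    cexp (c * x) * (cexp x - K) = cexp ((c + 1) * x) - K * cexp (c * x) := by
  rw [add_mul, one_mul, Complex.exp_add]
  ring

section CallPayoff

variable {c : ℂ} (hc : c.re < -1)
include hc

theorem re_add_one_neg : (c + 1).re < 0 := by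
  simp only [add_re, one_re]
  linarith

theorem integrableOn_cexp_mul_mul_cexp_sub (a K : ℝ) :
    IntegrableOn (fun x : ℝ => cexp (c * x) * (cexp x - K)) (Ioi a) := by
  simp_rw [cexp_mul_mul_cexp_sub]
  exact (integrableOn_exp_mul_complex_Ioi (re_add_one_neg hc) a).sub
    ((integrableOn_exp_mul_complex_Ioi (by linarith) a).const_mul _)

theorem integral_Ioi_log_cexp_mul_mul_cexp_sub {K : ℝ} (hK : 0 < K) :
    ∫ x in Ioi (Real.log K), cexp (c * x) * (cexp x - K) = (K : ℂ) ^ (c + 1) / (c * (c + 1)) := by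
  have hc0 : c ≠ 0 := fun h => by simp [h] at hc; linarith
  have hc1 : c + 1 ≠ 0 := fun h => by simpa [h] using re_add_one_neg hc
  simp_rw [cexp_mul_mul_cexp_sub]
  rw [integral_sub (integrableOn_exp_mul_complex_Ioi (re_add_one_neg hc) _)
      ((integrableOn_exp_mul_complex_Ioi (by linarith) _).const_mul _),
    integral_const_mul, integral_exp_mul_complex_Ioi (re_add_one_neg hc),
    integral_exp_mul_complex_Ioi (by linarith), cexp_mul_ofReal_log hK,
    cexp_mul_ofReal_log hK, cpow_add _ _ (ofReal_ne_zero.mpr hK.ne'), cpow_one]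
  field_simp
  ring

end CallPayoff

/-- Generalized Fourier transform of the call payoff: for `z = u + iρ` with `ρ < -1`,
`∫_{log K}^∞ e^{-izx}(e^x - K) dx = K^{ρ+1-iu}/((ρ-iu)(ρ+1-iu))`. -/
theorem stmt13 (K u ρ : ℝ) (hK : 0 < K) (hρ : ρ < -1) :
    IntegrableOn (fun x : ℝ => Complex.exp (-I * ((u : ℂ) + ρ * I) * x) *
        (Complex.exp x - K)) (Set.Ioi (Real.log K)) volume ∧
    ∫ x in Set.Ioi (Real.log K), Complex.exp (-I * ((u : ℂ) + ρ * I) * x) *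
        (Complex.exp x - K) =
      (K : ℂ) ^ ((ρ : ℂ) + 1 - I * u) / (((ρ : ℂ) - I * u) * ((ρ : ℂ) + 1 - I * u)) := by
  have hz : -I * ((u : ℂ) + ρ * I) = ρ - I * u := by ring_nf; rw [I_sq]; ring
  have hre : ((ρ : ℂ) - I * u).re < -1 := by simpa using hρ
  rw [hz, show (ρ : ℂ) + 1 - I * u = ρ - I * u + 1 by ring]
  exact ⟨integrableOn_cexp_mul_mul_cexp_sub hre _ K,
    integral_Ioi_log_cexp_mul_mul_cexp_sub hre hK⟩
end

section
/- For K > 0 and a complex number z = u + iρ with u ∈ ℝ and ρ > 0, the integral ∫_{-∞}^{log K} e^{-izx}(K - e^x) dx converges and equals K^{ρ+1-iu}/((ρ - iu)(ρ + 1 - iu)). -/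
open Complex MeasureTheory Set

lemma exp_mul_mul_sub_exp (a K : ℂ) (x : ℝ) :
    exp (a * x) * (K - exp x) = K * exp (a * x) - exp ((a + 1) * x) := by
  rw [add_one_mul, exp_add]
  ring

theorem integrableOn_exp_mul_mul_sub_exp_Iic {a : ℂ} (ha : 0 < a.re) (K : ℂ) (c : ℝ) :
    IntegrableOn (fun x : ℝ => exp (a * x) * (K - exp x)) (Iic c) := by
  have hb : 0 < (a + 1).re := by simp only [add_re, one_re]; linarith
  simp_rw [exp_mul_mul_sub_exp]
  exact ((integrableOn_exp_mul_complex_Iic ha c).const_mul K).sub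
    (integrableOn_exp_mul_complex_Iic hb c)

theorem integral_exp_mul_mul_sub_exp_Iic {a : ℂ} (ha : 0 < a.re) (K : ℂ) (c : ℝ) :
    ∫ x in Iic c, exp (a * x) * (K - exp x) =
      K * (exp (a * c) / a) - exp ((a + 1) * c) / (a + 1) := by
  have hb : 0 < (a + 1).re := by simp only [add_re, one_re]; linarith
  simp_rw [exp_mul_mul_sub_exp]
  rw [integral_sub ((integrableOn_exp_mul_complex_Iic ha c).const_mul K)
      (integrableOn_exp_mul_complex_Iic hb c), integral_const_mul,
    integral_exp_mul_complex_Iic ha, integral_exp_mul_complex_Iic hb]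

lemma exp_mul_log_eq_cpow {K : ℝ} (hK : 0 < K) (a : ℂ) :
    exp (a * Real.log K) = (K : ℂ) ^ a := by
  rw [cpow_def_of_ne_zero (ofReal_ne_zero.mpr hK.ne'), ofReal_log hK.le, mul_comm]

-- With `a = -iz` this is the transform of the put payoff `(K - e^x)⁺` along `Im z = ρ`.
theorem integral_Iio_log_exp_mul_mul_sub_exp {a : ℂ} (ha : 0 < a.re) {K : ℝ} (hK : 0 < K) :
    ∫ x in Iio (Real.log K), exp (a * x) * (K - exp x) = (K : ℂ) ^ (a + 1) / (a * (a + 1)) := by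
  have ha0 : a ≠ 0 := ne_of_apply_ne re ha.ne'
  have hb0 : a + 1 ≠ 0 := ne_of_apply_ne re (by simp only [add_re, one_re, zero_re]; linarith)
  rw [setIntegral_congr_set Iio_ae_eq_Iic, integral_exp_mul_mul_sub_exp_Iic ha,
    exp_mul_log_eq_cpow hK, exp_mul_log_eq_cpow hK, cpow_add _ _ (ofReal_ne_zero.mpr hK.ne'),
    cpow_one]
  field_simp
  ring

/-- Generalized Fourier transform of the put payoff: for `z = u + iρ` with `ρ > 0`,
`∫_{-∞}^{log K} e^{-izx}(K - e^x) dx = K^{ρ+1-iu}/((ρ-iu)(ρ+1-iu))`. -/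
theorem stmt14 (K u ρ : ℝ) (hK : 0 < K) (hρ : 0 < ρ) :
    IntegrableOn (fun x : ℝ => Complex.exp (-I * ((u : ℂ) + ρ * I) * x) *
        ((K : ℂ) - Complex.exp x)) (Set.Iio (Real.log K)) volume ∧
    ∫ x in Set.Iio (Real.log K), Complex.exp (-I * ((u : ℂ) + ρ * I) * x) *
        ((K : ℂ) - Complex.exp x) =
      (K : ℂ) ^ ((ρ : ℂ) + 1 - I * u) / (((ρ : ℂ) - I * u) * ((ρ : ℂ) + 1 - I * u)) := by
  have hz : -I * ((u : ℂ) + ρ * I) = ρ - I * u := by ring_nf; rw [I_sq]; ring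
  have ha : 0 < ((ρ : ℂ) - I * u).re := by simpa using hρ
  rw [hz, show (ρ : ℂ) + 1 - I * u = ρ - I * u + 1 by ring]
  exact ⟨(integrableOn_exp_mul_mul_sub_exp_Iic ha K _).mono_set Iio_subset_Iic_self,
    integral_Iio_log_exp_mul_mul_sub_exp ha hK⟩
end
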